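/- Let d ≥ 1, let f ∈ L¹(ℝ^d), and let λ > 0. Then there exists a collection 𝓕 of pairwise disjoint dyadic cubes with ∑_{Q∈𝓕} |Q| ≤ ‖f‖₁/λ such that for every dyadic cube T one has ∑_{Q} (Δ_Q f)²·|Q| ≤ (2^d·λ)²·|T|, where the sum is over all dyadic cubes Q ⊆ T that are not contained in any cube of 𝓕, and Δ_Q f := (|Q|^{−1} ∑_{Q' child of Q} |[f]_{Q'} − [f]_Q|²|Q'|)^{1/2}. -/

import Mathlib

/-!
Calderón–Zygmund stopping time. Let `𝓕` be the maximal dyadic cubes on which the average of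
`|f|` exceeds `λ`; they are disjoint, and `λ |F| ≤ ∫_F |f|` for each of them gives the measure
bound. A cube `Q` contained in no cube of `𝓕` has `[|f|]_Q ≤ λ`, hence `|[f]_{Q'}| ≤ 2^d λ` for
its children `Q'`. By orthogonality of martingale differences,
`(Δ_Q f)² |Q| = ∑_{Q'} [f]_{Q'}² |Q'| - [f]_Q² |Q|`, so the sum over such cubes `Q ⊆ T`
telescopes down the dyadic tree: over the first `N` generations it is at most
`(2^d λ)² |T| - [f]_T² |T|`, and the full sum is the supremum over `N`.
-/

open MeasureTheory
open scoped ENNReal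

noncomputable section

/-- A dyadic cube in `ℝ^d`, recorded by its scale `m` and corner `2^m • l`:
the cube `∏_i [2^m l_i, 2^m (l_i + 1))`. -/
structure DyadicCube (d : ℕ) where
  m : ℤ
  l : Fin d → ℤ

/-- The subset of `ℝ^d` corresponding to a dyadic cube. -/
def DyadicCube.set {d : ℕ} (Q : DyadicCube d) : Set (Fin d → ℝ) :=
  Set.univ.pi fun i => Set.Ico ((2:ℝ) ^ Q.m * (Q.l i : ℝ)) ((2:ℝ) ^ Q.m * ((Q.l i : ℝ) + 1))

/-- The dyadic children of `Q`, indexed by `c : Fin d → Bool` (there are `2^d` of them);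
each has half the sidelength of `Q`. -/
def DyadicCube.child {d : ℕ} (Q : DyadicCube d) (c : Fin d → Bool) : DyadicCube d :=
  ⟨Q.m - 1, fun i => 2 * Q.l i + (if c i then 1 else 0)⟩

/-- The average `[f]_Q = |Q|⁻¹ ∫_Q f` of `f` over a dyadic cube `Q`. -/
def dyadicAvg {d : ℕ} (f : (Fin d → ℝ) → ℝ) (Q : DyadicCube d) : ℝ :=
  ((volume Q.set).toReal)⁻¹ * ∫ x in Q.set, f x

/-- The martingale average `E_Q f = |[f]_Q|`. -/
def dyadicE {d : ℕ} (f : (Fin d → ℝ) → ℝ) (Q : DyadicCube d) : ℝ :=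
  |dyadicAvg f Q|

/-- The martingale difference
`Δ_Q f = (|Q|⁻¹ ∑_{Q' child of Q} |[f]_{Q'} - [f]_Q|² |Q'|)^{1/2}`. -/
def dyadicDelta {d : ℕ} (f : (Fin d → ℝ) → ℝ) (Q : DyadicCube d) : ℝ :=
  Real.sqrt (((volume Q.set).toReal)⁻¹ *
    ∑ c : Fin d → Bool,
      |dyadicAvg f (Q.child c) - dyadicAvg f Q| ^ 2 * (volume (Q.child c).set).toReal)

open Filter

theorem ENNReal.tsum_subtype_le_of_directed {α ι : Type*} [Nonempty ι] (g : α → ℝ≥0∞)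
    {s : Set α} {t : ι → Set α} (ht : Directed (· ⊆ ·) t) (hst : s ⊆ ⋃ i, t i) {C : ℝ≥0∞}
    (h : ∀ i, ∑' a : t i, g a ≤ C) : ∑' a : s, g a ≤ C := by
  classical
  rw [tsum_subtype, ENNReal.tsum_eq_iSup_sum]
  refine iSup_le fun u => ?_
  obtain ⟨i, hi⟩ := ht.exists_mem_subset_of_finset_subset_biUnion (s := u.filter (· ∈ s))
    fun a ha => hst (Finset.mem_filter.1 ha).2
  calc ∑ a ∈ u, s.indicator g a ≤ ∑ a ∈ u, (t i).indicator g a := by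
        refine Finset.sum_le_sum fun a ha => ?_
        by_cases has : a ∈ s
        · rw [Set.indicator_of_mem has, Set.indicator_of_mem (hi (by simpa using ⟨ha, has⟩))]
        · simp [has]
    _ ≤ ∑' a, (t i).indicator g a := ENNReal.sum_le_tsum u
    _ = ∑' a : t i, g a := (tsum_subtype _ _).symm
    _ ≤ C := h i

namespace DyadicCube

variable {d : ℕ}

lemma ext_iff {A B : DyadicCube d} : A = B ↔ A.m = B.m ∧ A.l = B.l := by
  cases A; cases B; simp

instance : Countable (DyadicCube d) :=
  Function.Injective.countable (f := fun Q : DyadicCube d => (Q.m, Q.l)) fun _ _ h =>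
    ext_iff.2 (Prod.ext_iff.1 h)

def ofPoint (m : ℤ) (x : Fin d → ℝ) : DyadicCube d := ⟨m, fun i => ⌊x i / 2 ^ m⌋⟩

/-- Membership in a dyadic cube is a floor computation; this turns the nesting of dyadic cubes
into integer division (`ofPoint_ancestor`). -/
lemma mem_set_iff {Q : DyadicCube d} {x : Fin d → ℝ} : x ∈ Q.set ↔ ofPoint Q.m x = Q := by
  have h2 : (0 : ℝ) < 2 ^ Q.m := zpow_pos two_pos _
  simp only [DyadicCube.set, Set.mem_univ_pi, Set.mem_Ico, ext_iff, ofPoint, true_and,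
    funext_iff, Int.floor_eq_iff, le_div_iff₀ h2, div_lt_iff₀ h2, mul_comm]

lemma set_nonempty (Q : DyadicCube d) : Q.set.Nonempty := by
  refine ⟨fun i => 2 ^ Q.m * Q.l i, mem_set_iff.2 <| ext_iff.2 ⟨rfl, funext fun i => ?_⟩⟩
  simp [ofPoint, mul_div_cancel_left₀ _ (zpow_ne_zero Q.m (two_ne_zero' ℝ))]

lemma eq_of_m_eq_of_mem {A B : DyadicCube d} {x : Fin d → ℝ} (hm : A.m = B.m)
    (hA : x ∈ A.set) (hB : x ∈ B.set) : A = B := by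
  rw [mem_set_iff] at hA hB
  rw [← hA, ← hB, hm]

def ancestor (Q : DyadicCube d) (k : ℕ) : DyadicCube d := ⟨Q.m + k, fun i => Q.l i / 2 ^ k⟩

@[simp] lemma ancestor_zero (Q : DyadicCube d) : Q.ancestor 0 = Q := by
  simp [ancestor]

lemma ancestor_ancestor (Q : DyadicCube d) (j k : ℕ) :
    (Q.ancestor j).ancestor k = Q.ancestor (j + k) := by
  simp only [ancestor, ext_iff, Nat.cast_add, add_assoc, pow_add, true_and]
  funext i
  exact Int.ediv_ediv_of_nonneg (by positivity)

lemma ofPoint_ancestor (m : ℤ) (x : Fin d → ℝ) (k : ℕ) :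
    (ofPoint m x).ancestor k = ofPoint (m + k) x := by
  simp only [ofPoint, ancestor, ext_iff, true_and]
  funext i
  rw [zpow_add₀ two_ne_zero, zpow_natCast, ← div_div]
  have := Int.floor_div_natCast (x i / 2 ^ m) (2 ^ k)
  push_cast at this
  exact this.symm

lemma subset_ancestor (Q : DyadicCube d) (k : ℕ) : Q.set ⊆ (Q.ancestor k).set := by
  intro x hx
  rw [mem_set_iff] at hx ⊢
  rw [← hx, ofPoint_ancestor]
  rfl

lemma eq_ancestor_of_mem {A B : DyadicCube d} {x : Fin d → ℝ} (hm : A.m ≤ B.m)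
    (hA : x ∈ A.set) (hB : x ∈ B.set) : B = A.ancestor (B.m - A.m).toNat :=
  eq_of_m_eq_of_mem (by simp only [ancestor]; omega) hB (subset_ancestor A _ hA)

lemma subset_of_m_le_of_mem {A B : DyadicCube d} {x : Fin d → ℝ} (hm : A.m ≤ B.m)
    (hA : x ∈ A.set) (hB : x ∈ B.set) : A.set ⊆ B.set := by
  rw [eq_ancestor_of_mem hm hA hB]
  exact subset_ancestor A _

lemma subset_or_subset_of_not_disjoint {A B : DyadicCube d} (h : ¬ Disjoint A.set B.set) :
    A.set ⊆ B.set ∨ B.set ⊆ A.set := by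
  obtain ⟨x, hA, hB⟩ := Set.not_disjoint_iff.1 h
  rcases le_total A.m B.m with hm | hm
  · exact .inl (subset_of_m_le_of_mem hm hA hB)
  · exact .inr (subset_of_m_le_of_mem hm hB hA)

lemma volume_set (Q : DyadicCube d) : volume Q.set = ENNReal.ofReal ((2 ^ Q.m) ^ d) := by
  have side : ∀ i, 2 ^ Q.m * ((Q.l i : ℝ) + 1) - 2 ^ Q.m * Q.l i = 2 ^ Q.m := fun i => by ring
  simp only [DyadicCube.set, volume_pi_pi, Real.volume_Ico, side, Finset.prod_const,
    Finset.card_univ, Fintype.card_fin, ENNReal.ofReal_pow (zpow_pos two_pos _).le]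

lemma toReal_volume_set (Q : DyadicCube d) : (volume Q.set).toReal = (2 ^ Q.m) ^ d := by
  rw [volume_set, ENNReal.toReal_ofReal (by positivity)]

lemma toReal_volume_set_pos (Q : DyadicCube d) : 0 < (volume Q.set).toReal := by
  rw [toReal_volume_set]; positivity

lemma volume_set_ne_top (Q : DyadicCube d) : volume Q.set ≠ ⊤ := by
  rw [volume_set]; exact ENNReal.ofReal_ne_top

lemma measurableSet_set (Q : DyadicCube d) : MeasurableSet Q.set :=
  .univ_pi fun _ => measurableSet_Ico

lemma m_le_of_subset (hd : 0 < d) {A B : DyadicCube d} (h : A.set ⊆ B.set) : A.m ≤ B.m := by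
  have := measure_mono (μ := volume) h
  rwa [volume_set, volume_set, ENNReal.ofReal_le_ofReal_iff (by positivity),
    pow_le_pow_iff_left₀ (by positivity) (by positivity) hd.ne',
    zpow_le_zpow_iff_right₀ one_lt_two] at this

lemma eq_ancestor_of_subset (hd : 0 < d) {Q P : DyadicCube d} (h : Q.set ⊆ P.set) :
    P = Q.ancestor (P.m - Q.m).toNat :=
  have ⟨_, hx⟩ := Q.set_nonempty
  eq_ancestor_of_mem (m_le_of_subset hd h) hx (h hx)

lemma toReal_volume_ancestor (Q : DyadicCube d) (k : ℕ) :
    (volume (Q.ancestor k).set).toReal = (volume Q.set).toReal * (2 ^ d) ^ k := by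
  rw [toReal_volume_set, toReal_volume_set, ancestor, zpow_add₀ (two_ne_zero' ℝ), zpow_natCast]
  ring

lemma child_injective (Q : DyadicCube d) : Function.Injective Q.child := by
  intro c c' h
  funext i
  have := congrFun (ext_iff.1 h).2 i
  simp only [child] at this
  cases hc : c i <;> cases hc' : c' i <;> simp_all

lemma ancestor_one_child (Q : DyadicCube d) (c : Fin d → Bool) : (Q.child c).ancestor 1 = Q := by
  simp only [child, ancestor, ext_iff, Nat.cast_one, sub_add_cancel, pow_one, true_and]
  funext i
  split <;> omega

lemma eq_child_of_ancestor_one_eq {Q R : DyadicCube d} (h : R.ancestor 1 = Q) :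
    R = Q.child fun i => decide (R.l i % 2 = 1) := by
  subst h
  simp only [child, ancestor, ext_iff, Nat.cast_one, add_sub_cancel_right, pow_one, true_and,
    decide_eq_true_eq]
  funext i
  split <;> omega

lemma child_subset (Q : DyadicCube d) (c : Fin d → Bool) : (Q.child c).set ⊆ Q.set := by
  simpa only [ancestor_one_child] using subset_ancestor (Q.child c) 1

lemma exists_mem_child {Q : DyadicCube d} {x : Fin d → ℝ} (hx : x ∈ Q.set) :
    ∃ c, x ∈ (Q.child c).set := by
  have hR : (ofPoint (Q.m - 1) x).ancestor 1 = Q := by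
    rw [ofPoint_ancestor, Nat.cast_one, sub_add_cancel]
    exact mem_set_iff.1 hx
  have hx' : x ∈ (ofPoint (Q.m - 1) x).set := mem_set_iff.2 rfl
  exact ⟨_, eq_child_of_ancestor_one_eq hR ▸ hx'⟩

lemma iUnion_child (Q : DyadicCube d) : ⋃ c, (Q.child c).set = Q.set :=
  (Set.iUnion_subset Q.child_subset).antisymm fun _ hx =>
    Set.mem_iUnion.2 (exists_mem_child hx)

lemma pairwise_disjoint_child (Q : DyadicCube d) :
    Pairwise fun c c' => Disjoint (Q.child c).set (Q.child c').set := by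
  intro c c' hne
  refine Set.disjoint_left.2 fun x hc hc' => hne (Q.child_injective ?_)
  exact eq_of_m_eq_of_mem rfl hc hc'

lemma toReal_volume_eq_two_pow_mul_child (Q : DyadicCube d) (c : Fin d → Bool) :
    (volume Q.set).toReal = 2 ^ d * (volume (Q.child c).set).toReal := by
  rw [toReal_volume_set, toReal_volume_set, ← mul_pow]
  congr 1
  rw [child, mul_comm, ← zpow_add_one₀ two_ne_zero, sub_add_cancel]

lemma sum_toReal_volume_child (Q : DyadicCube d) :
    ∑ c, (volume (Q.child c).set).toReal = (volume Q.set).toReal := by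
  calc ∑ c, (volume (Q.child c).set).toReal
        = ∑ _c : Fin d → Bool, (volume Q.set).toReal / 2 ^ d :=
        Finset.sum_congr rfl fun c _ => by
          rw [toReal_volume_eq_two_pow_mul_child Q c]; field_simp
    _ = (volume Q.set).toReal := by
        rw [Finset.sum_const, Finset.card_univ, Fintype.card_fun, Fintype.card_bool,
          Fintype.card_fin, nsmul_eq_mul]
        push_cast
        field_simp

lemma eq_of_subset_of_m_le (hd : 0 < d) {Q T : DyadicCube d} (h : Q.set ⊆ T.set)
    (hm : T.m ≤ Q.m) : Q = T :=
  have ⟨_, hx⟩ := Q.set_nonempty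
  eq_of_m_eq_of_mem ((m_le_of_subset hd h).antisymm hm) hx (h hx)

lemma eq_or_exists_subset_child (hd : 0 < d) {Q T : DyadicCube d} (h : Q.set ⊆ T.set) :
    Q = T ∨ ∃ c, Q.set ⊆ (T.child c).set := by
  obtain ⟨x, hx⟩ := Q.set_nonempty
  rcases (m_le_of_subset hd h).eq_or_lt with hm | hm
  · exact .inl (eq_of_m_eq_of_mem hm hx (h hx))
  · obtain ⟨c, hc⟩ := exists_mem_child (h hx)
    exact .inr ⟨c, subset_of_m_le_of_mem (by simp [child]; omega) hx hc⟩

variable {f : (Fin d → ℝ) → ℝ}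

lemma dyadicAvg_mul_toReal_volume (f : (Fin d → ℝ) → ℝ) (Q : DyadicCube d) :
    dyadicAvg f Q * (volume Q.set).toReal = ∫ x in Q.set, f x := by
  rw [dyadicAvg, mul_comm, ← mul_assoc, mul_inv_cancel₀ Q.toReal_volume_set_pos.ne', one_mul]

lemma sum_dyadicAvg_child_mul (Q : DyadicCube d) (hf : IntegrableOn f Q.set) :
    ∑ c, dyadicAvg f (Q.child c) * (volume (Q.child c).set).toReal =
      dyadicAvg f Q * (volume Q.set).toReal := by
  simp only [dyadicAvg_mul_toReal_volume]
  rw [← integral_iUnion_fintype (fun c => measurableSet_set _) Q.pairwise_disjoint_child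
    fun c => hf.mono_set (Q.child_subset c), iUnion_child]

lemma dyadicDelta_sq_mul_add (Q : DyadicCube d) (hf : IntegrableOn f Q.set) :
    dyadicDelta f Q ^ 2 * (volume Q.set).toReal + dyadicAvg f Q ^ 2 * (volume Q.set).toReal =
      ∑ c, dyadicAvg f (Q.child c) ^ 2 * (volume (Q.child c).set).toReal := by
  have hQ := Q.toReal_volume_set_pos
  have expand :
      ∑ c, (dyadicAvg f (Q.child c) - dyadicAvg f Q) ^ 2 * (volume (Q.child c).set).toReal
      = ∑ c, dyadicAvg f (Q.child c) ^ 2 * (volume (Q.child c).set).toReal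
        - 2 * dyadicAvg f Q * ∑ c, dyadicAvg f (Q.child c) * (volume (Q.child c).set).toReal
        + dyadicAvg f Q ^ 2 * ∑ c, (volume (Q.child c).set).toReal := by
    rw [Finset.mul_sum, Finset.mul_sum, ← Finset.sum_sub_distrib, ← Finset.sum_add_distrib]
    exact Finset.sum_congr rfl fun c _ => by ring
  rw [dyadicDelta, Real.sq_sqrt (by positivity), mul_comm, ← mul_assoc, mul_inv_cancel₀ hQ.ne',
    one_mul]
  simp_rw [sq_abs]
  rw [expand, Q.sum_dyadicAvg_child_mul hf, Q.sum_toReal_volume_child]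
  ring

lemma abs_dyadicAvg_le (f : (Fin d → ℝ) → ℝ) (Q : DyadicCube d) :
    |dyadicAvg f Q| ≤ dyadicAvg (fun x => |f x|) Q := by
  rw [dyadicAvg, dyadicAvg, abs_mul, abs_inv, abs_of_pos Q.toReal_volume_set_pos]
  gcongr
  exact abs_integral_le_integral_abs

lemma abs_dyadicAvg_child_le (Q : DyadicCube d) (hf : IntegrableOn f Q.set) (c : Fin d → Bool) :
    |dyadicAvg f (Q.child c)| ≤ 2 ^ d * dyadicAvg (fun x => |f x|) Q := by
  refine (abs_dyadicAvg_le f _).trans ?_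
  rw [dyadicAvg, dyadicAvg, Q.toReal_volume_eq_two_pow_mul_child c, mul_inv, ← mul_assoc,
    mul_inv_cancel_left₀ (by positivity)]
  gcongr
  · exact .of_forall fun _ => abs_nonneg _
  · exact hf.abs
  · exact Q.child_subset c

lemma dyadicAvg_abs_mul_le (hf : Integrable f) (Q : DyadicCube d) :
    dyadicAvg (fun x => |f x|) Q * (volume Q.set).toReal ≤ ∫ x, |f x| := by
  rw [dyadicAvg_mul_toReal_volume]
  exact setIntegral_le_integral hf.abs (.of_forall fun _ => abs_nonneg _)

def descendantsUpTo (T : DyadicCube d) (N : ℕ) : Set (DyadicCube d) :=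
  {Q | Q.set ⊆ T.set ∧ T.m ≤ Q.m + N}

lemma descendantsUpTo_mono (T : DyadicCube d) : Monotone T.descendantsUpTo :=
  fun _ _ hMN _ hQ => ⟨hQ.1, hQ.2.trans (by gcongr)⟩

lemma descendantsUpTo_zero_subset (hd : 0 < d) (T : DyadicCube d) :
    T.descendantsUpTo 0 ⊆ {T} :=
  fun _ ⟨hQT, hm⟩ => eq_of_subset_of_m_le hd hQT (by simpa using hm)

lemma descendantsUpTo_succ_subset (hd : 0 < d) (T : DyadicCube d) (N : ℕ) :
    T.descendantsUpTo (N + 1) ⊆ insert T (⋃ c, (T.child c).descendantsUpTo N) := by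
  rintro Q ⟨hQT, hm⟩
  rcases eq_or_exists_subset_child hd hQT with rfl | ⟨c, hc⟩
  · exact Set.mem_insert _ _
  · refine Set.mem_insert_of_mem _ (Set.mem_iUnion.2 ⟨c, hc, ?_⟩)
    simp only [child]
    push_cast at hm
    omega

lemma descendantsUpTo_inter_eq_empty {G : Set (DyadicCube d)}
    (hG : ∀ ⦃Q R⦄, Q.set ⊆ R.set → Q ∈ G → R ∈ G) {T : DyadicCube d} (hT : T ∉ G) (N : ℕ) :
    T.descendantsUpTo N ∩ G = ∅ :=
  Set.eq_empty_of_forall_notMem fun _ ⟨hQT, hQG⟩ => hT (hG hQT.1 hQG)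

lemma ofReal_dyadicDelta_sq_add_le (T : DyadicCube d) (hf : IntegrableOn f T.set) {B : ℝ}
    (X : (Fin d → Bool) → ℝ≥0∞)
    (hX : ∀ c, X c +
        ENNReal.ofReal (dyadicAvg f (T.child c) ^ 2 * (volume (T.child c).set).toReal) ≤
      ENNReal.ofReal (B ^ 2 * (volume (T.child c).set).toReal)) :
    ENNReal.ofReal (dyadicDelta f T ^ 2 * (volume T.set).toReal) + ∑ c, X c +
        ENNReal.ofReal (dyadicAvg f T ^ 2 * (volume T.set).toReal) ≤
      ENNReal.ofReal (B ^ 2 * (volume T.set).toReal) :=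
  calc _ = ∑ c, (X c +
          ENNReal.ofReal (dyadicAvg f (T.child c) ^ 2 * (volume (T.child c).set).toReal)) := by
        rw [add_right_comm, ← ENNReal.ofReal_add (by positivity) (by positivity),
          T.dyadicDelta_sq_mul_add hf, ENNReal.ofReal_sum_of_nonneg fun c _ => by positivity,
          Finset.sum_add_distrib, add_comm]
    _ ≤ ∑ c, ENNReal.ofReal (B ^ 2 * (volume (T.child c).set).toReal) :=
        Finset.sum_le_sum fun c _ => hX c
    _ = _ := by
        rw [← ENNReal.ofReal_sum_of_nonneg fun c _ => by positivity, ← Finset.mul_sum,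
          T.sum_toReal_volume_child]

section Energy

variable {G : Set (DyadicCube d)} {B : ℝ}

lemma tsum_descendantsUpTo_add_le (hd : 0 < d)
    (hf : ∀ Q : DyadicCube d, IntegrableOn f Q.set)
    (hG : ∀ ⦃Q R⦄, Q.set ⊆ R.set → Q ∈ G → R ∈ G)
    (hB : ∀ Q ∈ G, ∀ c, |dyadicAvg f (Q.child c)| ≤ B) (N : ℕ) :
    ∀ T ∈ G, ∑' Q : ↥(T.descendantsUpTo N ∩ G),
        ENNReal.ofReal (dyadicDelta f Q ^ 2 * (volume (Q : DyadicCube d).set).toReal) +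
        ENNReal.ofReal (dyadicAvg f T ^ 2 * (volume T.set).toReal) ≤
      ENNReal.ofReal (B ^ 2 * (volume T.set).toReal) := by
  set E : DyadicCube d → ℝ≥0∞ :=
    fun Q => ENNReal.ofReal (dyadicDelta f Q ^ 2 * (volume Q.set).toReal)
  have hchild : ∀ T ∈ G, ∀ c,
      ENNReal.ofReal (dyadicAvg f (T.child c) ^ 2 * (volume (T.child c).set).toReal) ≤
        ENNReal.ofReal (B ^ 2 * (volume (T.child c).set).toReal) := fun T hT c =>
    ENNReal.ofReal_le_ofReal <| mul_le_mul_of_nonneg_right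
      (sq_le_sq' (neg_le_of_abs_le (hB T hT c)) (le_of_abs_le (hB T hT c)))
      ENNReal.toReal_nonneg
  induction N with
  | zero =>
    intro T hT
    have hsum : ∑' Q : ↥(T.descendantsUpTo 0 ∩ G), E Q ≤ E T + ∑ _c : Fin d → Bool, 0 :=
      calc _ ≤ ∑' Q : ({T} : Set (DyadicCube d)), E Q := ENNReal.tsum_mono_subtype _
            (Set.inter_subset_left.trans (descendantsUpTo_zero_subset hd T))
        _ = _ := by simp
    exact (add_le_add hsum le_rfl).trans
      (ofReal_dyadicDelta_sq_add_le T (hf T) (fun _ => 0) fun c => by simpa using hchild T hT c)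
  | succ N ih =>
    intro T hT
    have hsum : ∑' Q : ↥(T.descendantsUpTo (N + 1) ∩ G), E Q ≤
        E T + ∑ c, ∑' Q : ↥((T.child c).descendantsUpTo N ∩ G), E Q := by
      have hsub :
          T.descendantsUpTo (N + 1) ∩ G ⊆ {T} ∪ ⋃ c, (T.child c).descendantsUpTo N ∩ G := by
        rintro Q ⟨hQ, hQG⟩
        rcases descendantsUpTo_succ_subset hd T N hQ with rfl | hQc
        · exact .inl rfl
        · obtain ⟨c, hc⟩ := Set.mem_iUnion.1 hQc
          exact .inr (Set.mem_iUnion.2 ⟨c, hc, hQG⟩)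
      calc _ ≤ _ := ENNReal.tsum_mono_subtype E hsub
        _ ≤ _ := ENNReal.tsum_union_le E _ _
        _ ≤ _ := by
          rw [tsum_singleton]
          gcongr
          exact ENNReal.tsum_iUnion_le E _
    refine (add_le_add hsum le_rfl).trans (ofReal_dyadicDelta_sq_add_le T (hf T) _ fun c => ?_)
    by_cases hc : T.child c ∈ G
    · exact ih _ hc
    · rw [descendantsUpTo_inter_eq_empty hG hc, tsum_empty, zero_add]
      exact hchild T hT c

theorem tsum_ofReal_dyadicDelta_sq_le (hd : 0 < d)
    (hf : ∀ Q : DyadicCube d, IntegrableOn f Q.set)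
    (hG : ∀ ⦃Q R⦄, Q.set ⊆ R.set → Q ∈ G → R ∈ G)
    (hB : ∀ Q ∈ G, ∀ c, |dyadicAvg f (Q.child c)| ≤ B) (T : DyadicCube d) :
    ∑' Q : {Q : DyadicCube d // Q.set ⊆ T.set ∧ Q ∈ G},
        ENNReal.ofReal (dyadicDelta f Q ^ 2 * (volume (Q : DyadicCube d).set).toReal) ≤
      ENNReal.ofReal (B ^ 2) * volume T.set := by
  refine ENNReal.tsum_subtype_le_of_directed (s := {Q | Q.set ⊆ T.set ∧ Q ∈ G})
    (fun Q => ENNReal.ofReal (dyadicDelta f Q ^ 2 * (volume Q.set).toReal))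
    (t := fun N => T.descendantsUpTo N ∩ G)
    (Monotone.directed_le fun _ _ hMN =>
      Set.inter_subset_inter_left G (T.descendantsUpTo_mono hMN))
    (fun Q ⟨hQT, hQG⟩ => Set.mem_iUnion.2 ⟨(T.m - Q.m).toNat, ⟨hQT, by omega⟩, hQG⟩) fun N => ?_
  by_cases hT : T ∈ G
  · rw [← ENNReal.ofReal_toReal T.volume_set_ne_top, ← ENNReal.ofReal_mul (sq_nonneg B)]
    exact le_self_add.trans (tsum_descendantsUpTo_add_le hd hf hG hB N T hT)
  · simp [descendantsUpTo_inter_eq_empty hG hT]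

end Energy

def calderonZygmundCubes (f : (Fin d → ℝ) → ℝ) (lam : ℝ) : Set (DyadicCube d) :=
  {F | lam < dyadicAvg (fun x => |f x|) F ∧
    ∀ P : DyadicCube d, F.set ⊆ P.set → P ≠ F → dyadicAvg (fun x => |f x|) P ≤ lam}

lemma pairwise_disjoint_calderonZygmundCubes (f : (Fin d → ℝ) → ℝ) (lam : ℝ) :
    (calderonZygmundCubes f lam).Pairwise fun A C => Disjoint A.set C.set := by
  intro A hA C hC hne
  by_contra h
  rcases subset_or_subset_of_not_disjoint h with hAC | hCA
  · exact (hA.2 C hAC hne.symm).not_gt hC.1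
  · exact (hC.2 A hCA hne).not_gt hA.1

variable {lam : ℝ}

lemma tsum_volume_le_of_le_dyadicAvg (hf : Integrable f) (hlam : 0 < lam)
    {𝓕 : Set (DyadicCube d)} (hdisj : 𝓕.Pairwise fun A C => Disjoint A.set C.set)
    (h𝓕 : ∀ F ∈ 𝓕, lam ≤ dyadicAvg (fun x => |f x|) F) :
    ∑' F : 𝓕, volume (F : DyadicCube d).set ≤ ENNReal.ofReal ((∫ x, |f x|) / lam) := by
  have habs : 0 ≤ᵐ[volume] fun x => |f x| := .of_forall fun _ => abs_nonneg _
  have key : ∀ F ∈ 𝓕, ENNReal.ofReal lam * volume F.set ≤ ∫⁻ x in F.set, ENNReal.ofReal |f x| :=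
    fun F hF => calc
      _ = ENNReal.ofReal (lam * (volume F.set).toReal) := by
        rw [ENNReal.ofReal_mul hlam.le, ENNReal.ofReal_toReal F.volume_set_ne_top]
      _ ≤ ENNReal.ofReal (∫ x in F.set, |f x|) := by
        rw [← F.dyadicAvg_mul_toReal_volume]
        gcongr
        exact h𝓕 F hF
      _ = _ := ofReal_integral_eq_lintegral_ofReal hf.abs.integrableOn (ae_restrict_of_ae habs)
  rw [ENNReal.ofReal_div_of_pos hlam, ENNReal.le_div_iff_mul_le (.inl (by simpa using hlam))
    (.inl ENNReal.ofReal_ne_top), mul_comm, ← ENNReal.tsum_mul_left,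
    ofReal_integral_eq_lintegral_ofReal hf.abs habs]
  calc _ ≤ ∑' F : 𝓕, ∫⁻ x in (F : DyadicCube d).set, ENNReal.ofReal |f x| :=
        ENNReal.tsum_le_tsum fun F => key F F.2
    _ = ∫⁻ x in ⋃ F : 𝓕, (F : DyadicCube d).set, ENNReal.ofReal |f x| :=
        (lintegral_iUnion (fun F => measurableSet_set _)
          (fun F F' hne => hdisj F.2 F'.2 (Subtype.coe_ne_coe.2 hne)) _).symm
    _ ≤ _ := setLIntegral_le_lintegral _ _

lemma tendsto_toReal_volume_ancestor (hd : 0 < d) (Q : DyadicCube d) :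
    Tendsto (fun k => (volume (Q.ancestor k).set).toReal) atTop atTop := by
  simp_rw [toReal_volume_ancestor]
  exact (tendsto_pow_atTop_atTop_of_one_lt (one_lt_pow₀ one_lt_two hd.ne')).const_mul_atTop
    Q.toReal_volume_set_pos

lemma dyadicAvg_abs_le_of_le_toReal_volume (hf : Integrable f) (hlam : 0 < lam)
    {Q : DyadicCube d} (h : (∫ x, |f x|) / lam ≤ (volume Q.set).toReal) :
    dyadicAvg (fun x => |f x|) Q ≤ lam := by
  rw [div_le_iff₀ hlam] at h
  exact le_of_mul_le_mul_right ((dyadicAvg_abs_mul_le hf Q).trans (by linarith))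
    Q.toReal_volume_set_pos

lemma exists_mem_calderonZygmundCubes_superset (hd : 0 < d) (hf : Integrable f)
    (hlam : 0 < lam) {Q : DyadicCube d} (hQ : lam < dyadicAvg (fun x => |f x|) Q) :
    ∃ F ∈ calderonZygmundCubes f lam, Q.set ⊆ F.set := by
  set K := {k : ℕ | lam < dyadicAvg (fun x => |f x|) (Q.ancestor k)}
  obtain ⟨N, hN⟩ := eventually_atTop.1
    ((tendsto_toReal_volume_ancestor hd Q).eventually_ge_atTop ((∫ x, |f x|) / lam))
  have hK : BddAbove K := ⟨N, fun k hk => not_lt.1 fun hNk =>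
    (dyadicAvg_abs_le_of_le_toReal_volume hf hlam (hN k hNk.le)).not_gt hk⟩
  have hk₀ : sSup K ∈ K := Nat.sSup_mem ⟨0, by simpa [K] using hQ⟩ hK
  refine ⟨Q.ancestor (sSup K), ⟨hk₀, fun P hP hne => ?_⟩, Q.subset_ancestor _⟩
  obtain ⟨j, rfl⟩ : ∃ j, P = (Q.ancestor (sSup K)).ancestor j :=
    ⟨_, eq_ancestor_of_subset hd hP⟩
  have hj : j ≠ 0 := by rintro rfl; exact hne (ancestor_zero _)
  have hjK : sSup K + j ∉ K := notMem_of_csSup_lt (by omega) hK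
  rw [ancestor_ancestor]
  exact not_lt.1 hjK

lemma dyadicAvg_abs_le_of_forall_not_subset (hd : 0 < d) (hf : Integrable f) (hlam : 0 < lam)
    {Q : DyadicCube d} (hQ : ∀ F ∈ calderonZygmundCubes f lam, ¬ Q.set ⊆ F.set) :
    dyadicAvg (fun x => |f x|) Q ≤ lam :=
  not_lt.1 fun h =>
    have ⟨F, hF, hQF⟩ := exists_mem_calderonZygmundCubes_superset hd hf hlam h
    hQ F hF hQF

end DyadicCube

open DyadicCube

/-- Weak-type (1,1) endpoint of the Carleson embedding for the dyadic martingale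
difference operator: for `f ∈ L¹` and `λ > 0` there is a collection `𝓕` of pairwise
disjoint dyadic cubes of total measure at most `‖f‖₁/λ` such that for every dyadic
cube `T`, summing `(Δ_Q f)² |Q|` over the dyadic cubes `Q ⊆ T` not contained in any
cube of `𝓕` gives at most `(2^d λ)² |T|`. -/
theorem dyadic_delta_weak_type (d : ℕ) (hd : 1 ≤ d)
    (f : (Fin d → ℝ) → ℝ) (hf : Integrable f volume) (lam : ℝ) (hlam : 0 < lam) :
    ∃ 𝓕 : Set (DyadicCube d),
      (𝓕.Pairwise fun A C => Disjoint A.set C.set) ∧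
      (∑' Q : 𝓕, volume (Q : DyadicCube d).set ≤ ENNReal.ofReal ((∫ x, |f x|) / lam)) ∧
      ∀ T : DyadicCube d,
        ∑' Q : {Q : DyadicCube d // Q.set ⊆ T.set ∧ ∀ F ∈ 𝓕, ¬ Q.set ⊆ F.set},
            ENNReal.ofReal
              ((dyadicDelta f (Q : DyadicCube d)) ^ 2 *
                (volume (Q : DyadicCube d).set).toReal) ≤
          ENNReal.ofReal ((2 ^ d * lam) ^ 2) * volume T.set := by
  have hdisj := pairwise_disjoint_calderonZygmundCubes f lam
  refine ⟨calderonZygmundCubes f lam, hdisj,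
    tsum_volume_le_of_le_dyadicAvg hf hlam hdisj fun F hF => hF.1.le, fun T => ?_⟩
  refine tsum_ofReal_dyadicDelta_sq_le hd (fun _ => hf.integrableOn)
    (G := {Q | ∀ F ∈ calderonZygmundCubes f lam, ¬ Q.set ⊆ F.set})
    (fun Q R hQR hQ F hF hRF => hQ F hF (hQR.trans hRF)) (fun Q hQ c => ?_) T
  calc |dyadicAvg f (Q.child c)| ≤ 2 ^ d * dyadicAvg (fun x => |f x|) Q :=
        Q.abs_dyadicAvg_child_le hf.integrableOn c
    _ ≤ 2 ^ d * lam := by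
        gcongr
        exact dyadicAvg_abs_le_of_forall_not_subset hd hf hlam hQ
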